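/- (Cartan-type decomposition of SU(1,1).) For every 2×2 complex matrix X with det X = 1 and XᴴηX = η (i.e. X ∈ SU(1,1)), there exist real numbers α, γ ∈ (−2π, 2π] and β ∈ [0, ∞) such that X = exp(α·K_z)·exp(β·K_y)·exp(γ·K_z), where exp denotes the matrix exponential. -/

import Mathlib

/-!
An element of SU(1,1) is a Cayley–Klein matrix `!![a, b; conj b, conj a]` with
`|a|² - |b|² = 1`, and `exp (α K_z) exp (β K_y) exp (γ K_z)` is the Cayley–Klein matrix with
`a = cosh (β/2) e^{-i(α+γ)/2}` and `b = -sinh (β/2) e^{-i(α-γ)/2}`. Hence `β = 2 arsinh |b|`,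
and `α + γ`, `α - γ` are read off from the phases of `a` and `-b`; reducing `α` and `γ`
separately modulo `4π` into `(-2π, 2π]` changes `(α ± γ)/2` only by multiples of `2π`.
-/

open Matrix

/-- The metric matrix η = diag(1, -1). -/
def eta : Matrix (Fin 2) (Fin 2) ℂ := !![1, 0; 0, -1]

/-- The generator K_y = (1/2)[[0,−1],[−1,0]] of su(1,1). -/
noncomputable def Ky : Matrix (Fin 2) (Fin 2) ℂ := (1 / 2 : ℂ) • !![0, -1; -1, 0]

/-- The generator K_z = (1/2)[[−i,0],[0,i]] of su(1,1). -/
noncomputable def Kz : Matrix (Fin 2) (Fin 2) ℂ :=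
  (1 / 2 : ℂ) • !![-Complex.I, 0; 0, Complex.I]

open ComplexConjugate

lemma exp_diagonal_fin_two (x y : ℂ) :
    NormedSpace.exp !![x, 0; 0, y] = !![Complex.exp x, 0; 0, Complex.exp y] := by
  have h := exp_diagonal ![x, y]
  rw [diagonal_fin_two] at h
  simp only [Matrix.cons_val_zero, Matrix.cons_val_one] at h
  rw [h, Pi.exp_def, diagonal_fin_two]
  simp [← Complex.exp_eq_exp_ℂ]

lemma exp_smul_Kz (t : ℝ) : NormedSpace.exp (t • Kz) =
    !![Complex.exp (-(t / 2) * Complex.I), 0; 0, Complex.exp (t / 2 * Complex.I)] := by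
  rw [← exp_diagonal_fin_two]
  congr 1
  ext i j
  fin_cases i <;> fin_cases j <;> simp [Kz] <;> ring

lemma exp_smul_Ky (t : ℝ) : NormedSpace.exp (t • Ky) =
    !![(Real.cosh (t / 2) : ℂ), -(Real.sinh (t / 2) : ℂ);
       -(Real.sinh (t / 2) : ℂ), (Real.cosh (t / 2) : ℂ)] := by
  let P : Matrix (Fin 2) (Fin 2) ℂ := !![1, 1; 1, -1]
  have hPP : ((1 / 2 : ℂ) • P) * P = 1 := by
    ext i j
    fin_cases i <;> fin_cases j <;> simp [P, mul_apply, Fin.sum_univ_two] <;> norm_num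
  have hPinv : P⁻¹ = (1 / 2 : ℂ) • P := inv_eq_left_inv hPP
  have hP : IsUnit P := (isUnit_iff_isUnit_det P).2 (isUnit_det_of_left_inverse hPP)
  have hdiag : t • Ky = P * !![(-(t / 2) : ℂ), 0; 0, (t / 2 : ℂ)] * P⁻¹ := by
    rw [hPinv]
    ext i j
    fin_cases i <;> fin_cases j <;> simp [P, Ky, mul_apply, Fin.sum_univ_two] <;> ring
  rw [hdiag, exp_conj _ _ hP, exp_diagonal_fin_two, hPinv]
  ext i j
  fin_cases i <;> fin_cases j <;>
    simp [P, mul_apply, Fin.sum_univ_two, Complex.ofReal_cosh, Complex.ofReal_sinh,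
      Complex.cosh, Complex.sinh] <;> ring

lemma conj_ofReal_mul_exp_mul_I (r x : ℝ) :
    conj ((r : ℂ) * Complex.exp (x * Complex.I)) = r * Complex.exp (-x * Complex.I) := by
  rw [map_mul, Complex.conj_ofReal, ← Complex.exp_conj]
  simp [Complex.conj_ofReal]

def cayleyKlein (a b : ℂ) : Matrix (Fin 2) (Fin 2) ℂ := !![a, b; conj b, conj a]

lemma exists_eq_cayleyKlein {X : Matrix (Fin 2) (Fin 2) ℂ}
    (hdet : X.det = 1) (hη : Xᴴ * eta * X = eta) :
    ∃ a b : ℂ, ‖a‖ ^ 2 = 1 + ‖b‖ ^ 2 ∧ X = cayleyKlein a b := by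
  have e00 := congrFun (congrFun hη 0) 0
  have e01 := congrFun (congrFun hη 0) 1
  have e10 := congrFun (congrFun hη 1) 0
  have e11 := congrFun (congrFun hη 1) 1
  simp [eta, mul_apply, Fin.sum_univ_two] at e00 e01 e10 e11
  rw [det_fin_two] at hdet
  have hd : X 1 1 = conj (X 0 0) := by
    linear_combination (-(X 1 1)) * e00 + conj (X 0 0) * hdet + X 1 0 * e01
  have hc : X 1 0 = conj (X 0 1) := by
    linear_combination conj (X 0 1) * hdet + X 1 0 * e11 - X 1 1 * e10
  refine ⟨X 0 0, X 0 1, ?_, ?_⟩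
  · rw [hc, Complex.conj_conj] at e00
    have : ((‖X 0 0‖ ^ 2 : ℝ) : ℂ) = ((1 + ‖X 0 1‖ ^ 2 : ℝ) : ℂ) := by
      push_cast
      rw [← Complex.mul_conj', ← Complex.mul_conj']
      linear_combination e00
    exact_mod_cast this
  · ext i j
    fin_cases i <;> fin_cases j <;> simp [cayleyKlein, hc, hd]

lemma exp_smul_Kz_mul_exp_smul_Ky_mul_exp_smul_Kz (α β γ : ℝ) :
    NormedSpace.exp (α • Kz) * NormedSpace.exp (β • Ky) * NormedSpace.exp (γ • Kz) =
      cayleyKlein (Real.cosh (β / 2) * Complex.exp ((-(α + γ) / 2 : ℝ) * Complex.I))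
        (-(Real.sinh (β / 2) * Complex.exp ((-(α - γ) / 2 : ℝ) * Complex.I))) := by
  simp only [cayleyKlein, map_neg, conj_ofReal_mul_exp_mul_I, exp_smul_Kz, exp_smul_Ky]
  ext i j
  fin_cases i <;> fin_cases j <;> simp [mul_apply, Fin.sum_univ_two]
  all_goals rw [mul_right_comm, ← Complex.exp_add]; ring_nf

lemma exists_mem_Ioc_eq_add_int_mul_four_pi (x : ℝ) :
    ∃ y ∈ Set.Ioc (-(2 * Real.pi)) (2 * Real.pi), ∃ k : ℤ, y = x + k * (4 * Real.pi) := by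
  have hp : 0 < 4 * Real.pi := by positivity
  have hmem := toIocMod_mem_Ioc hp (-(2 * Real.pi)) x
  rw [show -(2 * Real.pi) + 4 * Real.pi = 2 * Real.pi by ring] at hmem
  refine ⟨_, hmem, -toIocDiv hp (-(2 * Real.pi)) x, ?_⟩
  push_cast
  linear_combination toIocMod_sub_self_eq_mul hp (-(2 * Real.pi)) x

lemma exists_angles (θ φ : ℝ) :
    ∃ α ∈ Set.Ioc (-(2 * Real.pi)) (2 * Real.pi), ∃ γ ∈ Set.Ioc (-(2 * Real.pi)) (2 * Real.pi),
      Complex.exp ((-(α + γ) / 2 : ℝ) * Complex.I) = Complex.exp (θ * Complex.I) ∧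
      Complex.exp ((-(α - γ) / 2 : ℝ) * Complex.I) = Complex.exp (φ * Complex.I) := by
  obtain ⟨α, hα, m, rfl⟩ := exists_mem_Ioc_eq_add_int_mul_four_pi (-(θ + φ))
  obtain ⟨γ, hγ, n, rfl⟩ := exists_mem_Ioc_eq_add_int_mul_four_pi (φ - θ)
  refine ⟨_, hα, _, hγ, ?_, ?_⟩ <;> rw [Complex.exp_eq_exp_iff_exists_int]
  · exact ⟨-(m + n), by push_cast; ring⟩
  · exact ⟨n - m, by push_cast; ring⟩

theorem stmt19 (X : Matrix (Fin 2) (Fin 2) ℂ)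
    (hdet : X.det = 1) (hη : Xᴴ * eta * X = eta) :
    ∃ α γ β : ℝ,
      α ∈ Set.Ioc (-(2 * Real.pi)) (2 * Real.pi) ∧
      γ ∈ Set.Ioc (-(2 * Real.pi)) (2 * Real.pi) ∧
      0 ≤ β ∧
      X = NormedSpace.exp (α • Kz) * NormedSpace.exp (β • Ky) *
            NormedSpace.exp (γ • Kz) := by
  obtain ⟨a, b, hab, rfl⟩ := exists_eq_cayleyKlein hdet hη
  obtain ⟨α, hα, γ, hγ, hθ, hφ⟩ := exists_angles (Complex.arg a) (Complex.arg (-b))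
  refine ⟨α, γ, 2 * Real.arsinh ‖b‖, hα, hγ, ?_, ?_⟩
  · exact mul_nonneg zero_le_two (Real.arsinh_nonneg_iff.2 (norm_nonneg b))
  rw [exp_smul_Kz_mul_exp_smul_Ky_mul_exp_smul_Kz, mul_div_cancel_left₀ _ two_ne_zero,
    Real.cosh_arsinh, Real.sinh_arsinh, hθ, hφ, ← hab, Real.sqrt_sq (norm_nonneg a),
    Complex.norm_mul_exp_arg_mul_I, ← norm_neg b, Complex.norm_mul_exp_arg_mul_I, neg_neg]
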